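/- For all k ≥ 1, the quantity t(k) = s(2k-1) + s(2k) = 2·s(2k) equals the number of binary partitions of 2k, i.e., the number of partitions of 2k all of whose parts are powers of 2. -/

import Mathlib

/-- The parts of a partition as a weakly decreasing list. -/
def sortedParts {n : ℕ} (mu : n.Partition) : List ℕ :=
  (Multiset.sort mu.parts (· ≤ ·)).reverse
/-- A list of parts is *strongly decreasing* if each entry (except possibly the
last) is strictly greater than the sum of all later entries. -/
def StronglyDecreasing : List ℕ → Prop
  | [] => True
  | a :: r => (r = [] ∨ r.sum < a) ∧ StronglyDecreasing r
/-- `s n` is the number of strongly decreasing (sd-)partitions of `n`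
(so `s 0 = 1`, counting the empty partition). -/
noncomputable def s (n : ℕ) : ℕ :=
  Nat.card {μ : n.Partition // StronglyDecreasing (sortedParts μ)}

/-!
Removing the largest part `a` of an sd-partition of `n > 0` leaves an arbitrary sd-partition
of some `m` with `2 m < n` (then `a = n - m > m`), so `s n = ∑_{2m < n} s m`; hence
`s (2k+2) = s (2k+1)` and `s (2k+1) = s (2k) + s k`. A binary partition of `n + 1` either
contains a `1`, which can be removed, or has only even parts, which can be halved; so the
number `b n` of binary partitions satisfies `b (2k+1) = b (2k)` and
`b (2k+2) = b (2k+1) + b (k+1)`. Together these give `b (n+2) = 2 s (n+1)` by strong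
induction.
-/

theorem Nat.card_subtype_eq_card_and_add_card_and_not {α : Type*} [Finite α] (p q : α → Prop) :
    Nat.card {x // p x} = Nat.card {x // q x ∧ p x} + Nat.card {x // ¬ q x ∧ p x} := by
  classical
  rw [← Nat.card_sum]
  exact Nat.card_congr <| (Equiv.sumCompl fun x : {x // p x} => q x).symm.trans <| Equiv.sumCongr
    ((Equiv.subtypeSubtypeEquivSubtypeInter p q).trans <| Equiv.subtypeEquivRight fun _ => and_comm)
    ((Equiv.subtypeSubtypeEquivSubtypeInter p (¬ q ·)).trans <|
      Equiv.subtypeEquivRight fun _ => and_comm)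

theorem Nat.two_dvd_of_isPowerOfTwo {a : ℕ} (h : a.isPowerOfTwo) (ha : a ≠ 1) : 2 ∣ a := by
  obtain ⟨_ | j, rfl⟩ := h
  · exact absurd rfl ha
  · exact dvd_pow_self 2 j.succ_ne_zero

theorem Nat.isPowerOfTwo_div_two {a : ℕ} (h : a.isPowerOfTwo) (ha : a ≠ 1) :
    (a / 2).isPowerOfTwo := by
  obtain ⟨_ | j, rfl⟩ := h
  · exact absurd rfl ha
  · exact ⟨j, by rw [pow_succ, Nat.mul_div_cancel _ two_pos]⟩

theorem Nat.isPowerOfTwo_two_mul {a : ℕ} (h : a.isPowerOfTwo) : (2 * a).isPowerOfTwo :=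
  mul_comm a 2 ▸ Nat.isPowerOfTwo_mul_two_of_isPowerOfTwo h

theorem Multiset.map_two_mul_div_two {t : Multiset ℕ} (h : ∀ a ∈ t, 2 ∣ a) :
    t.map (fun a => 2 * (a / 2)) = t :=
  (Multiset.map_congr rfl fun a ha => Nat.mul_div_cancel' (h a ha)).trans t.map_id'

theorem StronglyDecreasing.pairwise_gt {l : List ℕ} (h : StronglyDecreasing l) :
    l.Pairwise (· > ·) := by
  induction l with
  | nil => exact .nil
  | cons a r ih =>
    obtain ⟨hhead, htail⟩ := h
    refine .cons (fun x hx => ?_) (ih htail)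
    rcases hhead with rfl | hlt
    · simp at hx
    · exact (List.le_sum_of_mem hx).trans_lt hlt

theorem stronglyDecreasing_cons_iff {a : ℕ} {r : List ℕ} (ha : 0 < a) :
    StronglyDecreasing (a :: r) ↔ r.sum < a ∧ StronglyDecreasing r := by
  refine and_congr_left fun _ => or_iff_right_of_imp ?_
  rintro rfl
  exact ha

theorem coe_sortedParts {n : ℕ} (μ : n.Partition) :
    (sortedParts μ : Multiset ℕ) = μ.parts := by
  rw [sortedParts, Multiset.coe_reverse, Multiset.sort_eq]

theorem sortedParts_ofComposition {n : ℕ} {c : Composition n}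
    (h : c.blocks.Pairwise (· ≥ ·)) :
    sortedParts (Nat.Partition.ofComposition n c) = c.blocks := by
  have hrev : c.blocks.reverse.Pairwise (· ≤ ·) := List.pairwise_reverse.2 h
  rw [sortedParts, Nat.Partition.ofComposition_parts, ← Multiset.coe_reverse, Multiset.coe_sort,
    List.mergeSort_eq_self (r := (· ≤ ·)) hrev, List.reverse_reverse]

def sdPartitionEquivSDComposition (n : ℕ) :
    {μ : n.Partition // StronglyDecreasing (sortedParts μ)} ≃
      {c : Composition n // StronglyDecreasing c.blocks} where
  toFun μ := ⟨⟨sortedParts μ.1, fun hi => μ.1.parts_pos (coe_sortedParts μ.1 ▸ hi),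
    by rw [← Multiset.sum_coe, coe_sortedParts, μ.1.parts_sum]⟩, μ.2⟩
  invFun c := ⟨.ofComposition n c.1, by
    rw [sortedParts_ofComposition (c.2.pairwise_gt.imp le_of_lt)]; exact c.2⟩
  left_inv μ := Subtype.ext <| Nat.Partition.ext <| coe_sortedParts μ.1
  right_inv c := Subtype.ext <| Composition.ext <|
    sortedParts_ofComposition (c.2.pairwise_gt.imp le_of_lt)

def sdCompositionEquivSigma {n : ℕ} (hn : 0 < n) :
    {c : Composition n // StronglyDecreasing c.blocks} ≃
      Σ m : Fin ((n + 1) / 2), {c : Composition m // StronglyDecreasing c.blocks} where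
  toFun
    | ⟨⟨[], _, hsum⟩, _⟩ => absurd hsum (by rw [List.sum_nil]; omega)
    | ⟨⟨a :: r, hpos, hsum⟩, hsd⟩ =>
      have hr : r.sum < a := ((stronglyDecreasing_cons_iff (hpos List.mem_cons_self)).1 hsd).1
      ⟨⟨r.sum, by rw [List.sum_cons] at hsum; omega⟩,
        ⟨r, fun hi => hpos (List.mem_cons_of_mem a hi), rfl⟩, hsd.2⟩
  invFun
    | ⟨m, ⟨r, hpos, hsum⟩, hsd⟩ =>
      have hlt : (m : ℕ) < n - m := by have := m.2; omega
      ⟨⟨(n - m) :: r, fun hi => by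
          rcases List.mem_cons.1 hi with rfl | hi
          · omega
          · exact hpos hi,
        by rw [List.sum_cons, hsum]; omega⟩,
        (stronglyDecreasing_cons_iff (by omega)).2 ⟨hsum ▸ hlt, hsd⟩⟩
  left_inv
    | ⟨⟨[], _, hsum⟩, _⟩ => absurd hsum (by rw [List.sum_nil]; omega)
    | ⟨⟨a :: r, hpos, hsum⟩, hsd⟩ => by
      rw [List.sum_cons] at hsum
      exact Subtype.ext <| Composition.ext <| congrArg (· :: r) (show n - r.sum = a by omega)
  right_inv := by
    rintro ⟨⟨m, hm⟩, ⟨r, hpos, hsum⟩, hsd⟩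
    dsimp only at hsum
    subst hsum
    rfl

theorem s_eq_card_sdComposition (n : ℕ) :
    s n = Nat.card {c : Composition n // StronglyDecreasing c.blocks} :=
  Nat.card_congr (sdPartitionEquivSDComposition n)

theorem s_eq_sum_range {n : ℕ} (hn : 0 < n) :
    s n = ∑ m ∈ Finset.range ((n + 1) / 2), s m := by
  rw [s_eq_card_sdComposition, Nat.card_congr (sdCompositionEquivSigma hn), Nat.card_sigma,
    ← Fin.sum_univ_eq_sum_range]
  simp only [s_eq_card_sdComposition]

theorem s_two_mul_add_two (k : ℕ) : s (2 * k + 2) = s (2 * k + 1) := by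
  rw [s_eq_sum_range (by omega), s_eq_sum_range (by omega)]
  congr 2
  omega

theorem s_two_mul_add_one {k : ℕ} (hk : 0 < k) : s (2 * k + 1) = s (2 * k) + s k := by
  rw [s_eq_sum_range (by omega), s_eq_sum_range (by omega),
    show (2 * k + 1 + 1) / 2 = k + 1 by omega, show (2 * k + 1) / 2 = k by omega,
    Finset.sum_range_succ]

theorem s_zero : s 0 = 1 :=
  Nat.card_eq_one_iff_unique.2
    ⟨inferInstance, ⟨⟨default, by simp [sortedParts, StronglyDecreasing]⟩⟩⟩


namespace Nat.Partition

def IsBinary {n : ℕ} (μ : n.Partition) : Prop := ∀ a ∈ μ.parts, a.isPowerOfTwo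

theorem IsBinary.two_dvd {n : ℕ} {μ : n.Partition} (hμ : μ.IsBinary) (h1 : 1 ∉ μ.parts) :
    ∀ a ∈ μ.parts, 2 ∣ a :=
  fun a ha => Nat.two_dvd_of_isPowerOfTwo (hμ a ha) (ne_of_mem_of_not_mem ha h1)

theorem isBinary_iff_forall_mem_erase_one {n : ℕ} {μ : n.Partition} (h : 1 ∈ μ.parts) :
    μ.IsBinary ↔ ∀ a ∈ μ.parts.erase 1, a.isPowerOfTwo := by
  calc μ.IsBinary ↔ ∀ a ∈ 1 ::ₘ μ.parts.erase 1, a.isPowerOfTwo := by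
        rw [Multiset.cons_erase h]; rfl
    _ ↔ _ := by simp only [Multiset.forall_mem_cons, Nat.isPowerOfTwo_one, true_and]

end Nat.Partition

open Nat.Partition

noncomputable def numBinaryPartitions (n : ℕ) : ℕ := Nat.card {μ : n.Partition // μ.IsBinary}

def binaryPartitionsWithOneEquiv (n : ℕ) :
    {μ : (n + 1).Partition // 1 ∈ μ.parts ∧ μ.IsBinary} ≃
      {ν : n.Partition // ν.IsBinary} :=
  (Equiv.subtypeSubtypeEquivSubtypeInter _ _).symm.trans <|
    Equiv.subtypeEquiv (partitionWithPartEquiv le_rfl (by omega)) fun μ => by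
      rw [isBinary_iff_forall_mem_erase_one μ.2]; rfl

def binaryPartitionsWithoutOneEquiv (m : ℕ) :
    {μ : (2 * m).Partition // 1 ∉ μ.parts ∧ μ.IsBinary} ≃
      {ν : m.Partition // ν.IsBinary} where
  toFun μ :=
    have hdvd := μ.2.2.two_dvd μ.2.1
    ⟨⟨μ.1.parts.map (· / 2), fun hi => by
        obtain ⟨a, ha, rfl⟩ := Multiset.mem_map.1 hi
        have := μ.1.parts_pos ha; have := hdvd a ha; omega,
      by
        have hsum := μ.1.parts_sum
        rw [← Multiset.map_two_mul_div_two hdvd, Multiset.sum_map_mul_left] at hsum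
        omega⟩,
      fun b hb => by
        obtain ⟨a, ha, rfl⟩ := Multiset.mem_map.1 hb
        exact Nat.isPowerOfTwo_div_two (μ.2.2 a ha) (ne_of_mem_of_not_mem ha μ.2.1)⟩
  invFun ν := ⟨⟨ν.1.parts.map (2 * ·), fun hi => by
      obtain ⟨a, ha, rfl⟩ := Multiset.mem_map.1 hi
      have := ν.1.parts_pos ha; omega,
    by rw [Multiset.sum_map_mul_left, Multiset.map_id', ν.1.parts_sum]⟩,
    fun h1 => by obtain ⟨a, -, ha⟩ := Multiset.mem_map.1 h1; omega,
    fun b hb => by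
      obtain ⟨a, ha, rfl⟩ := Multiset.mem_map.1 hb
      exact Nat.isPowerOfTwo_two_mul (ν.2 a ha)⟩
  left_inv μ := Subtype.ext <| Nat.Partition.ext <|
    (Multiset.map_map _ _ _).trans <| Multiset.map_two_mul_div_two (μ.2.2.two_dvd μ.2.1)
  right_inv ν := Subtype.ext <| Nat.Partition.ext <| by
    simp [Multiset.map_map]

theorem numBinaryPartitions_succ (n : ℕ) :
    numBinaryPartitions (n + 1) =
      numBinaryPartitions n +
        Nat.card {μ : (n + 1).Partition // 1 ∉ μ.parts ∧ μ.IsBinary} := by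
  rw [numBinaryPartitions, Nat.card_subtype_eq_card_and_add_card_and_not _ (1 ∈ ·.parts),
    Nat.card_congr (binaryPartitionsWithOneEquiv n), numBinaryPartitions]

theorem numBinaryPartitions_two_mul_add_one (k : ℕ) :
    numBinaryPartitions (2 * k + 1) = numBinaryPartitions (2 * k) := by
  have : IsEmpty {μ : (2 * k + 1).Partition // 1 ∉ μ.parts ∧ μ.IsBinary} := by
    refine ⟨fun μ => ?_⟩
    have h := Multiset.dvd_sum (μ.2.2.two_dvd μ.2.1)
    rw [μ.1.parts_sum] at h
    omega
  rw [numBinaryPartitions_succ, Nat.card_of_isEmpty, add_zero]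

theorem numBinaryPartitions_two_mul_add_two (k : ℕ) :
    numBinaryPartitions (2 * k + 2) =
      numBinaryPartitions (2 * k + 1) + numBinaryPartitions (k + 1) := by
  rw [numBinaryPartitions_succ]
  exact congrArg _ (Nat.card_congr (binaryPartitionsWithoutOneEquiv (k + 1)))

theorem numBinaryPartitions_zero : numBinaryPartitions 0 = 1 :=
  Nat.card_eq_one_iff_unique.2 ⟨inferInstance, ⟨⟨default, by simp [IsBinary]⟩⟩⟩

theorem numBinaryPartitions_add_two (n : ℕ) : numBinaryPartitions (n + 2) = 2 * s (n + 1) := by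
  induction n using Nat.strong_induction_on with
  | _ n ih =>
  obtain ⟨k, rfl | rfl⟩ := Nat.even_or_odd' n
  · rcases k with _ | j
    · rw [numBinaryPartitions_two_mul_add_two, numBinaryPartitions_two_mul_add_one,
        Nat.mul_zero, zero_add, s_eq_sum_range one_pos]
      simp [s_zero, numBinaryPartitions_zero]
    · have h1 : numBinaryPartitions (2 * (j + 1) + 1) = 2 * s (2 * (j + 1)) :=
        ih (2 * j + 1) (by omega)
      have h2 : numBinaryPartitions (j + 2) = 2 * s (j + 1) := ih j (by omega)
      rw [numBinaryPartitions_two_mul_add_two, s_two_mul_add_one j.succ_pos, h1, h2]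
      ring
  · rw [show 2 * k + 1 + 2 = 2 * (k + 1) + 1 by ring, numBinaryPartitions_two_mul_add_one,
      show 2 * k + 1 + 1 = 2 * k + 2 by ring, s_two_mul_add_two]
    exact ih (2 * k) (by omega)

/-- For all `k ≥ 1`, the quantity `t(k) = s(2k-1) + s(2k) = 2·s(2k)` equals the
number of binary partitions of `2k`, i.e. the number of partitions of `2k` all
of whose parts are powers of `2`. -/
theorem sd_count_and_binary_partitions (k : ℕ) (hk : 1 ≤ k) :
    s (2 * k - 1) + s (2 * k) =
      Nat.card {μ : (2 * k).Partition // ∀ a ∈ μ.parts, ∃ j : ℕ, a = 2 ^ j} ∧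
    2 * s (2 * k) =
      Nat.card {μ : (2 * k).Partition // ∀ a ∈ μ.parts, ∃ j : ℕ, a = 2 ^ j} := by
  obtain ⟨j, rfl⟩ := Nat.exists_eq_add_of_le' hk
  have hs : s (2 * (j + 1) - 1) = s (2 * (j + 1)) := (s_two_mul_add_two j).symm
  have hB : numBinaryPartitions (2 * (j + 1)) = 2 * s (2 * (j + 1)) := by
    rw [← hs]
    exact numBinaryPartitions_add_two (2 * j)
  exact ⟨by rw [hs, ← two_mul]; exact hB.symm, hB.symm⟩
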